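/- arXiv:1604.06377 — 7 statements merged into one kernel-verified Lean document; each statement's English description precedes it below -/
import Mathlib

section
/- For any two probability measures P and Q on the same measurable space, both absolutely continuous with respect to a common measure, and any measurable event A, we have P(A) + Q(Aᶜ) ≥ (1/2) · exp(−min(KL(P‖Q), KL(Q‖P))), where KL denotes the Kullback–Leibler divergence. -/
/-!
Bretagnolle–Huber, through the Bhattacharyya coefficient `ρ = ∫ √(dQ/dP) dP`. Jensen's inequality
for `exp`, applied to `-llr P Q / 2`, gives `exp (-KL(P‖Q) / 2) ≤ ρ`. Writing
`√d = √(min d 1) · √(max d 1)` for `d = dQ/dP`, Cauchy–Schwarz gives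
`ρ² ≤ (∫ min d 1 dP) (∫ max d 1 dP) ≤ (P(A) + Q(Aᶜ)) · 2`. Exchanging `P, Q` and `A, Aᶜ`
yields the bound with `KL(Q‖P)`.
-/

open MeasureTheory Real
open scoped ENNReal

open Classical in
/-- KL divergence of `P` with respect to `Q`, valued in `ℝ≥0∞` (possibly `∞`). -/
noncomputable def klDiv {α : Type*} [MeasurableSpace α] (P Q : Measure α) : ℝ≥0∞ :=
  if P ≪ Q ∧ Integrable (llr P Q) P then ENNReal.ofReal (∫ x, llr P Q x ∂P) else ⊤

/-- `exp(-x)` for `x : ℝ≥0∞`, with the convention `exp(-∞) = 0`. -/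
noncomputable def expNeg (x : ℝ≥0∞) : ℝ :=
  if x = ⊤ then 0 else Real.exp (-x.toReal)

namespace MeasureTheory.Measure

variable {α : Type*} [MeasurableSpace α] {μ ν : Measure α} {A : Set α}

lemma lintegral_min_rnDeriv_one_le (hA : MeasurableSet A) :
    ∫⁻ x, min (ν.rnDeriv μ x) 1 ∂μ ≤ μ A + ν Aᶜ := by
  rw [← lintegral_add_compl _ hA]
  gcongr
  · calc ∫⁻ x in A, min (ν.rnDeriv μ x) 1 ∂μ ≤ ∫⁻ _ in A, 1 ∂μ := by gcongr; exact min_le_right _ _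
      _ = μ A := by simp
  · calc ∫⁻ x in Aᶜ, min (ν.rnDeriv μ x) 1 ∂μ ≤ ∫⁻ x in Aᶜ, ν.rnDeriv μ x ∂μ := by
          gcongr; exact min_le_left _ _
      _ ≤ ν Aᶜ := setLIntegral_rnDeriv_le _

lemma lintegral_max_rnDeriv_one_le :
    ∫⁻ x, max (ν.rnDeriv μ x) 1 ∂μ ≤ ν Set.univ + μ Set.univ :=
  calc ∫⁻ x, max (ν.rnDeriv μ x) 1 ∂μ ≤ ∫⁻ x, ν.rnDeriv μ x + 1 ∂μ := by
        gcongr with x; exact max_le le_self_add le_add_self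
    _ = ∫⁻ x, ν.rnDeriv μ x ∂μ + μ Set.univ := by
        rw [lintegral_add_right _ measurable_const, lintegral_one]
    _ ≤ ν Set.univ + μ Set.univ := by gcongr; exact lintegral_rnDeriv_le

/-- Cauchy–Schwarz applied to `√(dν/dμ) = √(min (dν/dμ) 1) * √(max (dν/dμ) 1)`. -/
lemma lintegral_rnDeriv_rpow_half_sq_le (hA : MeasurableSet A) :
    (∫⁻ x, ν.rnDeriv μ x ^ (1 / 2 : ℝ) ∂μ) ^ 2 ≤ (μ A + ν Aᶜ) * (ν Set.univ + μ Set.univ) := by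
  have h_split : ∀ x, ν.rnDeriv μ x ^ (1 / 2 : ℝ) =
      min (ν.rnDeriv μ x) 1 ^ (1 / 2 : ℝ) * max (ν.rnDeriv μ x) 1 ^ (1 / 2 : ℝ) := fun x => by
    rw [← ENNReal.mul_rpow_of_nonneg _ _ (by norm_num), min_mul_max, mul_one]
  have h_cs : ∫⁻ x, ν.rnDeriv μ x ^ (1 / 2 : ℝ) ∂μ ≤
      (∫⁻ x, min (ν.rnDeriv μ x) 1 ∂μ) ^ (1 / 2 : ℝ) *
        (∫⁻ x, max (ν.rnDeriv μ x) 1 ∂μ) ^ (1 / 2 : ℝ) := by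
    simp_rw [h_split]
    exact ENNReal.lintegral_mul_norm_pow_le
      ((ν.measurable_rnDeriv μ).min measurable_const).aemeasurable
      ((ν.measurable_rnDeriv μ).max measurable_const).aemeasurable
      (by norm_num) (by norm_num) (by norm_num)
  calc (∫⁻ x, ν.rnDeriv μ x ^ (1 / 2 : ℝ) ∂μ) ^ 2
      ≤ ((∫⁻ x, min (ν.rnDeriv μ x) 1 ∂μ) ^ (1 / 2 : ℝ) *
          (∫⁻ x, max (ν.rnDeriv μ x) 1 ∂μ) ^ (1 / 2 : ℝ)) ^ 2 := by gcongr
    _ = (∫⁻ x, min (ν.rnDeriv μ x) 1 ∂μ) * ∫⁻ x, max (ν.rnDeriv μ x) 1 ∂μ := by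
        rw [← ENNReal.mul_rpow_of_nonneg _ _ (by norm_num), ← ENNReal.rpow_natCast,
          ← ENNReal.rpow_mul]
        norm_num
    _ ≤ (μ A + ν Aᶜ) * (ν Set.univ + μ Set.univ) := by
        gcongr
        exacts [lintegral_min_rnDeriv_one_le hA, lintegral_max_rnDeriv_one_le]

/-- Jensen's inequality for `exp`, using `exp (-llr μ ν / 2) = √(dν/dμ)` `μ`-a.e. -/
lemma ofReal_exp_neg_half_integral_llr_le [IsProbabilityMeasure μ] [SigmaFinite ν] (hμν : μ ≪ ν)
    (h_int : Integrable (llr μ ν) μ) :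
    ENNReal.ofReal (exp (-(∫ x, llr μ ν x ∂μ) / 2)) ≤ ∫⁻ x, ν.rnDeriv μ x ^ (1 / 2 : ℝ) ∂μ := by
  set g : α → ℝ≥0∞ := fun x => ν.rnDeriv μ x ^ (1 / 2 : ℝ)
  by_cases hg_top : ∫⁻ x, g x ∂μ = ⊤
  · exact hg_top ▸ le_top
  have hg : AEMeasurable g μ := ((ν.measurable_rnDeriv μ).pow_const _).aemeasurable
  have h_exp : (fun x => exp (-llr μ ν x / 2)) =ᵐ[μ] fun x => (g x).toReal := by
    filter_upwards [exp_neg_llr hμν] with x hx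
    rw [exp_half, hx, sqrt_eq_rpow, ENNReal.toReal_rpow]
  rw [← ENNReal.ofReal_toReal hg_top, ← integral_toReal hg (ae_lt_top' hg hg_top),
    ← integral_congr_ae h_exp]
  gcongr
  calc exp (-(∫ x, llr μ ν x ∂μ) / 2) = exp (∫ x, -llr μ ν x / 2 ∂μ) := by
        rw [integral_div, integral_neg]
    _ ≤ ∫ x, exp (-llr μ ν x / 2) ∂μ :=
        convexOn_exp.map_integral_le continuous_exp.continuousOn isClosed_univ
          (Filter.Eventually.of_forall fun _ => Set.mem_univ _) (h_int.neg.div_const 2)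
          ((integrable_toReal_of_lintegral_ne_top hg hg_top).congr h_exp.symm)

lemma ofReal_exp_neg_integral_llr_le [IsProbabilityMeasure μ] [IsProbabilityMeasure ν]
    (hμν : μ ≪ ν) (h_int : Integrable (llr μ ν) μ) (hA : MeasurableSet A) :
    ENNReal.ofReal (exp (-∫ x, llr μ ν x ∂μ)) ≤ 2 * (μ A + ν Aᶜ) :=
  calc ENNReal.ofReal (exp (-∫ x, llr μ ν x ∂μ))
      = ENNReal.ofReal (exp (-(∫ x, llr μ ν x ∂μ) / 2)) ^ 2 := by
        rw [← ENNReal.ofReal_pow (exp_pos _).le, ← exp_nat_mul]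
        ring_nf
    _ ≤ (∫⁻ x, ν.rnDeriv μ x ^ (1 / 2 : ℝ) ∂μ) ^ 2 := by
        gcongr; exact ofReal_exp_neg_half_integral_llr_le hμν h_int
    _ ≤ (μ A + ν Aᶜ) * (ν Set.univ + μ Set.univ) := lintegral_rnDeriv_rpow_half_sq_le hA
    _ = 2 * (μ A + ν Aᶜ) := by rw [measure_univ, measure_univ, one_add_one_eq_two, mul_comm]

end MeasureTheory.Measure

lemma expNeg_ofReal_le (r : ℝ) : expNeg (ENNReal.ofReal r) ≤ exp (-r) := by
  rw [expNeg, if_neg ENNReal.ofReal_ne_top, ENNReal.toReal_ofReal']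
  gcongr
  exact le_max_left _ _

lemma half_mul_expNeg_klDiv_le {α : Type*} [MeasurableSpace α] (P Q : Measure α)
    [IsProbabilityMeasure P] [IsProbabilityMeasure Q] {A : Set α} (hA : MeasurableSet A) :
    1 / 2 * expNeg (klDiv P Q) ≤ (P A).toReal + (Q Aᶜ).toReal := by
  by_cases h : P ≪ Q ∧ Integrable (llr P Q) P
  · rw [klDiv, if_pos h]
    have h_le := Measure.ofReal_exp_neg_integral_llr_le h.1 h.2 hA
    rw [ENNReal.ofReal_le_iff_le_toReal (by finiteness), ENNReal.toReal_mul, ENNReal.toReal_ofNat,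
      ENNReal.toReal_add (by finiteness) (by finiteness)] at h_le
    linarith [expNeg_ofReal_le (∫ x, llr P Q x ∂P)]
  · rw [klDiv, if_neg h, expNeg, if_pos rfl, mul_zero]
    positivity

theorem tsybakov_two_measures_general {α : Type*} [MeasurableSpace α]
    (P Q : Measure α) [IsProbabilityMeasure P] [IsProbabilityMeasure Q]
    {A : Set α} (hA : MeasurableSet A) :
    (P A).toReal + (Q Aᶜ).toReal ≥ (1 / 2) * expNeg (min (klDiv P Q) (klDiv Q P)) := by
  rcases min_cases (klDiv P Q) (klDiv Q P) with ⟨h_min, -⟩ | ⟨h_min, -⟩ <;> rw [h_min]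
  · exact half_mul_expNeg_klDiv_le P Q hA
  · have h_swap := half_mul_expNeg_klDiv_le Q P hA.compl
    rw [compl_compl] at h_swap
    linarith

/-- For probability measures `P`, `Q` absolutely continuous with respect to a common measure `ν`,
and any measurable event `A`,
`P(A) + Q(Aᶜ) ≥ (1/2) exp(-min(KL(P‖Q), KL(Q‖P)))`. -/
theorem tsybakov_two_measures {α : Type*} [MeasurableSpace α]
    (P Q ν : Measure α) [IsProbabilityMeasure P] [IsProbabilityMeasure Q]
    (hPν : P ≪ ν) (hQν : Q ≪ ν) {A : Set α} (hA : MeasurableSet A) :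
    (P A).toReal + (Q Aᶜ).toReal ≥ (1 / 2) * expNeg (min (klDiv P Q) (klDiv Q P)) :=
  tsybakov_two_measures_general P Q hA
end

section
/- For probabilities p, q ∈ [0,1], the inequality p + q ≥ (1/2) · ((1−q)/p)^p · (q/(1−p))^(1−p) holds (interpreting the right-hand side via the convention 0^0 = 1 and as 0 when division by zero makes it degenerate). -/
open Real

/-!
Weighted AM–GM applied to `√a` and `√b`, where `a = (1-q)/p` and `b = q/(1-p)`, gives
`a^p b^(1-p) ≤ (p√a + (1-p)√b)² ≤ 2 (p² a + (1-p)² b) = 2 (p + q - 2pq)`.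
Applying AM–GM to `a` and `b` themselves would only bound the right-hand side by `1/2`.
-/

theorem rpow_mul_rpow_one_sub_le_sq {a b w : ℝ} (ha : 0 ≤ a) (hb : 0 ≤ b) (hw0 : 0 ≤ w)
    (hw1 : w ≤ 1) : a ^ w * b ^ (1 - w) ≤ (w * √a + (1 - w) * √b) ^ 2 := by
  have hsq : a ^ w * b ^ (1 - w) = (√a ^ w * √b ^ (1 - w)) ^ 2 := by
    conv_lhs => rw [← mul_self_sqrt ha, ← mul_self_sqrt hb]
    rw [mul_rpow (sqrt_nonneg a) (sqrt_nonneg a), mul_rpow (sqrt_nonneg b) (sqrt_nonneg b)]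
    ring
  rw [hsq]
  gcongr
  exact geom_mean_le_arith_mean2_weighted hw0 (by linarith) (sqrt_nonneg a) (sqrt_nonneg b)
      (by ring)

theorem sq_mul_div_self {K : Type*} [Field K] (x y : K) : x ^ 2 * (y / x) = x * y := by
  rw [sq, div_eq_mul_inv, mul_left_comm, mul_comm y, mul_self_mul_inv]

/-- For `p, q ∈ [0,1]`, `p + q ≥ (1/2) ((1-q)/p)^p (q/(1-p))^(1-p)`, where real powers
are interpreted with the conventions `0^0 = 1` and `x/0 = 0`. -/
theorem binary_kl_sum_lower_bound {p q : ℝ}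
    (hp0 : 0 ≤ p) (hp1 : p ≤ 1) (hq0 : 0 ≤ q) (hq1 : q ≤ 1) :
    p + q ≥ (1 / 2) * ((1 - q) / p) ^ p * (q / (1 - p)) ^ (1 - p) := by
  set a := (1 - q) / p
  set b := q / (1 - p)
  have ha : 0 ≤ a := div_nonneg (by linarith) hp0
  have hb : 0 ≤ b := div_nonneg hq0 (by linarith)
  calc (1 / 2) * a ^ p * b ^ (1 - p)
      ≤ (1 / 2) * (p * √a + (1 - p) * √b) ^ 2 := by
        rw [mul_assoc]; gcongr; exact rpow_mul_rpow_one_sub_le_sq ha hb hp0 hp1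
    _ ≤ p ^ 2 * a + (1 - p) ^ 2 * b := by
        have := add_sq_le (a := p * √a) (b := (1 - p) * √b)
        rw [mul_pow, mul_pow, sq_sqrt ha, sq_sqrt hb] at this
        linarith
    _ = p + q - 2 * p * q := by rw [sq_mul_div_self, sq_mul_div_self]; ring
    _ ≤ p + q := by linarith [mul_nonneg hp0 hq0]
end

section
/- For real numbers p, q ∈ (0,1), we have ((1−q)/p)^p · (q/(1−p))^(1−p) ≤ (√(p(1−q)) + √(q(1−p)))², and consequently ((1−q)/p)^p · (q/(1−p))^(1−p) ≤ 2(p(1−q) + q(1−p)) ≤ 2(p+q). -/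
open Real

/-! Writing `x = √((1-q)/p)` and `y = √(q/(1-p))`, the left-hand side is `(x^p y^(1-p))²`, and
weighted AM-GM bounds `x^p y^(1-p)` by `p x + (1-p) y = √(p(1-q)) + √(q(1-p))`. -/

lemma Real.rpow_mul_rpow_one_sub_le_sq_add {w a b : ℝ} (hw0 : 0 ≤ w) (hw1 : w ≤ 1)
    (ha : 0 ≤ a) (hb : 0 ≤ b) :
    a ^ w * b ^ (1 - w) ≤ (w * √a + (1 - w) * √b) ^ 2 := by
  have hamgm : √a ^ w * √b ^ (1 - w) ≤ w * √a + (1 - w) * √b :=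
    geom_mean_le_arith_mean2_weighted hw0 (by linarith) (sqrt_nonneg a) (sqrt_nonneg b)
      (by ring)
  calc a ^ w * b ^ (1 - w)
      = (√a * √a) ^ w * (√b * √b) ^ (1 - w) := by rw [mul_self_sqrt ha, mul_self_sqrt hb]
    _ = (√a ^ w * √b ^ (1 - w)) ^ 2 := by
        rw [mul_rpow (sqrt_nonneg a) (sqrt_nonneg a), mul_rpow (sqrt_nonneg b) (sqrt_nonneg b)]
        ring
    _ ≤ (w * √a + (1 - w) * √b) ^ 2 := pow_le_pow_left₀ (by positivity) hamgm 2

lemma Real.mul_sqrt_div_self {c : ℝ} (hc : 0 < c) (d : ℝ) : c * √(d / c) = √(c * d) :=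
  calc c * √(d / c) = √(c ^ 2) * √(d / c) := by rw [sqrt_sq hc.le]
    _ = √(c ^ 2 * (d / c)) := (sqrt_mul (sq_nonneg c) _).symm
    _ = √(c * d) := by congr 1; field_simp

/-- For `p, q ∈ (0,1)`:
`((1-q)/p)^p (q/(1-p))^(1-p) ≤ (√(p(1-q)) + √(q(1-p)))² ≤ 2(p(1-q) + q(1-p)) ≤ 2(p+q)`. -/
theorem binary_kl_amgm_chain {p q : ℝ}
    (hp0 : 0 < p) (hp1 : p < 1) (hq0 : 0 < q) (hq1 : q < 1) :
    ((1 - q) / p) ^ p * (q / (1 - p)) ^ (1 - p)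
        ≤ (Real.sqrt (p * (1 - q)) + Real.sqrt (q * (1 - p))) ^ (2 : ℕ) ∧
      (Real.sqrt (p * (1 - q)) + Real.sqrt (q * (1 - p))) ^ (2 : ℕ)
        ≤ 2 * (p * (1 - q) + q * (1 - p)) ∧
      2 * (p * (1 - q) + q * (1 - p)) ≤ 2 * (p + q) := by
  have h1p : 0 < 1 - p := by linarith
  have h1q : 0 < 1 - q := by linarith
  refine ⟨?_, ?_, by nlinarith⟩
  · calc ((1 - q) / p) ^ p * (q / (1 - p)) ^ (1 - p)
        ≤ (p * √((1 - q) / p) + (1 - p) * √(q / (1 - p))) ^ 2 :=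
          rpow_mul_rpow_one_sub_le_sq_add hp0.le hp1.le (by positivity) (by positivity)
      _ = (√(p * (1 - q)) + √(q * (1 - p))) ^ 2 := by
          rw [mul_sqrt_div_self hp0, mul_sqrt_div_self h1p, mul_comm (1 - p)]
  · calc (√(p * (1 - q)) + √(q * (1 - p))) ^ 2
        ≤ 2 * (√(p * (1 - q)) ^ 2 + √(q * (1 - p)) ^ 2) := add_sq_le
      _ = 2 * (p * (1 - q) + q * (1 - p)) := by
          rw [sq_sqrt (by positivity), sq_sqrt (by positivity)]
end

section
/- The binary Kullback–Leibler divergence satisfies the data-processing style inequality: if P and Q are probability measures and A is an event with p = P(A) and q = Q(Aᶜ), then KL(P‖Q) ≥ kl(p, 1−q), where kl(a,b) = a·log(a/b) + (1−a)·log((1−a)/(1−b)) is the divergence between Bernoulli(a) and Bernoulli(b). -/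
open MeasureTheory Real
open scoped ENNReal

open Classical in
/-- Binary (Bernoulli) KL divergence `kl(a,b)`, with the conventions `0 log 0 = 0` and
`x log (x/0) = +∞` for `x > 0`. -/
noncomputable def klBin (a b : ℝ) : ℝ≥0∞ :=
  if (b = 0 ∧ a ≠ 0) ∨ (b = 1 ∧ a ≠ 1) then ⊤
  else ENNReal.ofReal (a * Real.log (a / b) + (1 - a) * Real.log ((1 - a) / (1 - b)))

/-!
Split `∫ llr P Q ∂P` over `A` and `Aᶜ`. On each piece `B`, the log-sum inequality (Jensen for
`x ↦ x log x`, applied to the restrictions of `P` and `Q` to `B`) gives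
`P(B) log (P(B) / Q(B)) ≤ ∫ x in B, llr P Q x ∂P`, and the two lower bounds add up to
`kl(P(A), Q(A))`, with `Q(A) = 1 - Q(Aᶜ)`.
-/

namespace MeasureTheory.Measure

variable {α : Type*} [MeasurableSpace α] {s : Set α}

lemma rnDeriv_restrict_restrict (μ ν : Measure α) [HaveLebesgueDecomposition μ ν] [SigmaFinite ν]
    (hs : MeasurableSet s) :
    (μ.restrict s).rnDeriv (ν.restrict s) =ᵐ[ν.restrict s] μ.rnDeriv ν := by
  refine (eq_rnDeriv (measurable_rnDeriv μ ν)
    ((mutuallySingular_singularPart μ ν).mono (restrict_le_self (s := s)) restrict_le_self)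
    ?_).symm
  conv_lhs => rw [haveLebesgueDecomposition_add μ ν]
  rw [restrict_add, restrict_withDensity hs]

end MeasureTheory.Measure

namespace MeasureTheory

variable {α : Type*} [MeasurableSpace α] {μ ν : Measure α} {s : Set α}

lemma llr_restrict_restrict [SigmaFinite μ] [SigmaFinite ν] (hs : MeasurableSet s) :
    llr (μ.restrict s) (ν.restrict s) =ᵐ[ν.restrict s] llr μ ν := by
  filter_upwards [Measure.rnDeriv_restrict_restrict μ ν hs] with x hx
  simp only [llr_def, hx]

lemma mul_log_le_setIntegral_llr [IsFiniteMeasure μ] [IsFiniteMeasure ν] (hμν : μ ≪ ν)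
    (h_int : Integrable (llr μ ν) μ) (hs : MeasurableSet s) :
    μ.real s * log (μ.real s / ν.real s) ≤ ∫ x in s, llr μ ν x ∂μ := by
  have hμν_s : μ.restrict s ≪ ν.restrict s := hμν.restrict s
  have h_llr : llr (μ.restrict s) (ν.restrict s) =ᵐ[μ.restrict s] llr μ ν :=
    hμν_s.ae_le (llr_restrict_restrict hs)
  have h_int_s : Integrable (llr (μ.restrict s) (ν.restrict s)) (μ.restrict s) :=
    (integrable_congr h_llr).2 h_int.restrict
  have h := InformationTheory.mul_log_le_toReal_klDiv hμν_s h_int_s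
  rw [InformationTheory.toReal_klDiv hμν_s h_int_s, integral_congr_ae h_llr] at h
  simpa [measureReal_restrict_apply hs] using h

end MeasureTheory

open MeasureTheory in
lemma klBin_probReal_eq {α : Type*} [MeasurableSpace α] {P Q : Measure α}
    [IsProbabilityMeasure P] [IsProbabilityMeasure Q] (hPQ : P ≪ Q) {A : Set α}
    (hA : MeasurableSet A) :
    klBin (P.real A) (Q.real A) = ENNReal.ofReal
      (P.real A * log (P.real A / Q.real A) + P.real Aᶜ * log (P.real Aᶜ / Q.real Aᶜ)) := by
  have h_null {B : Set α} (hB : Q.real B = 0) : P.real B = 0 := by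
    rw [measureReal_eq_zero_iff] at hB ⊢
    exact hPQ hB
  rw [klBin, if_neg, probReal_compl_eq_one_sub hA, probReal_compl_eq_one_sub hA]
  rintro (⟨hQ, hP⟩ | ⟨hQ, hP⟩)
  · exact hP (h_null hQ)
  · have hPc := h_null (B := Aᶜ) (by rw [probReal_compl_eq_one_sub hA, hQ, sub_self])
    rw [probReal_compl_eq_one_sub hA] at hPc
    exact hP (by linarith)

/-- Data-processing inequality for the binary KL divergence: if `p = P(A)` and `q = Q(Aᶜ)`,
then `KL(P‖Q) ≥ kl(p, 1 - q)`. -/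
theorem klDiv_ge_klBin {α : Type*} [MeasurableSpace α]
    (P Q : Measure α) [IsProbabilityMeasure P] [IsProbabilityMeasure Q]
    (hPQ : P ≪ Q) {A : Set α} (hA : MeasurableSet A) :
    klDiv P Q ≥ klBin (P A).toReal (1 - (Q Aᶜ).toReal) := by
  by_cases h_int : Integrable (llr P Q) P
  · rw [ge_iff_le, klDiv, if_pos ⟨hPQ, h_int⟩, ← integral_add_compl hA h_int]
    change klBin (P.real A) (1 - Q.real Aᶜ) ≤ _
    rw [probReal_compl_eq_one_sub hA, sub_sub_cancel, klBin_probReal_eq hPQ hA]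
    exact ENNReal.ofReal_le_ofReal <| add_le_add (mul_log_le_setIntegral_llr hPQ h_int hA)
      (mul_log_le_setIntegral_llr hPQ h_int hA.compl)
  · rw [klDiv, if_neg fun h ↦ h_int h.2]
    exact le_top
end

section
/- Let {a_n} be a bounded sequence of real numbers. If there exist constants C > 0 and n₀ such that ∑_{m=1}^{n} a_m ≥ C·log n for all n ≥ n₀, then a_n ≥ C/(2n) for infinitely many n. -/
open Real Filter

/-!
If `a n < C / (2n)` for all large `n`, then comparing `a (n + 1)` with the increment
`log (n + 1) - log n ≥ 1 / (n + 1)` shows that the partial sums grow at most like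
`(C / 2) log n + O(1)`, which is incompatible with the lower bound `C log n` since `log n → ∞`.
-/

lemma inv_add_one_le_log_add_one_sub_log {x : ℝ} (hx : 0 < x) :
    (x + 1)⁻¹ ≤ log (x + 1) - log x := by
  have h := one_sub_inv_le_log_of_pos (div_pos (by linarith : 0 < x + 1) hx)
  rwa [log_div (by linarith) hx.ne', inv_div, one_sub_div (by linarith), add_sub_cancel_left,
    one_div] at h

lemma exists_sum_Icc_le_mul_log_add {a : ℕ → ℝ} {c : ℝ} (hc : 0 ≤ c)
    (h : ∀ᶠ n in atTop, a n ≤ c / n) :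
    ∃ K, ∀ᶠ n in atTop, ∑ m ∈ Finset.Icc 1 n, a m ≤ c * log n + K := by
  obtain ⟨b, hb⟩ := eventually_atTop.1 (h.and (eventually_ge_atTop 1))
  set f : ℕ → ℝ := fun n ↦ c * log n - ∑ m ∈ Finset.Icc 1 n, a m
  have hmono : MonotoneOn f (Set.Ici b) := by
    refine monotoneOn_nat_Ici_of_le_succ fun n hn ↦ ?_
    have hn_pos : (0 : ℝ) < n := by exact_mod_cast (hb n hn).2
    have hstep : a (n + 1) ≤ c * (log (n + 1) - log n) := calc
      a (n + 1) ≤ c * (n + 1 : ℝ)⁻¹ := by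
        simpa [div_eq_mul_inv] using (hb (n + 1) (by omega)).1
      _ ≤ c * (log (n + 1) - log n) :=
        mul_le_mul_of_nonneg_left (inv_add_one_le_log_add_one_sub_log hn_pos) hc
    simp only [f, Finset.sum_Icc_succ_top (by omega : 1 ≤ n + 1), Nat.cast_add_one]
    linarith
  refine ⟨-f b, eventually_atTop.2 ⟨b, fun n hn ↦ ?_⟩⟩
  have := hmono (Set.mem_Ici.2 le_rfl) (Set.mem_Ici.2 hn) hn
  simp only [f] at this
  linarith

theorem frequently_ge_of_partial_sums_ge_log_general (a : ℕ → ℝ) {C : ℝ} (hC : 0 < C) (n₀ : ℕ)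
    (hsum : ∀ n, n₀ ≤ n → C * Real.log n ≤ ∑ m ∈ Finset.Icc 1 n, a m) :
    ∃ᶠ n in atTop, C / (2 * n) ≤ a n := by
  by_contra h
  rw [not_frequently] at h
  have hsmall : ∀ᶠ n in atTop, a n ≤ C / 2 / n :=
    h.mono fun n hn ↦ by rw [← div_mul_eq_div_div]; exact (not_le.1 hn).le
  obtain ⟨K, hK⟩ := exists_sum_Icc_le_mul_log_add (by positivity) hsmall
  have hlog : Tendsto (fun n : ℕ ↦ C / 2 * log n) atTop atTop :=
    (tendsto_log_atTop.comp tendsto_natCast_atTop_atTop).const_mul_atTop (by positivity)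
  obtain ⟨n, hupper, hlarge, hn⟩ :=
    (hK.and ((hlog.eventually_gt_atTop K).and (eventually_ge_atTop n₀))).exists
  linarith [hsum n hn]

/-- If a bounded sequence `a` satisfies `∑_{m=1}^n a_m ≥ C log n` for all `n ≥ n₀`,
with `C > 0`, then `a_n ≥ C/(2n)` for infinitely many `n`. -/
theorem frequently_ge_of_partial_sums_ge_log (a : ℕ → ℝ) (M : ℝ)
    (hbdd : ∀ n, |a n| ≤ M) {C : ℝ} (hC : 0 < C) (n₀ : ℕ)
    (hsum : ∀ n, n₀ ≤ n → C * Real.log n ≤ ∑ m ∈ Finset.Icc 1 n, a m) :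
    ∃ᶠ n in atTop, C / (2 * n) ≤ a n :=
  frequently_ge_of_partial_sums_ge_log_general a hC n₀ hsum
end

section
/- Consider two coupled queues driven by the same arrival process A(t): Q(t) = (Q(t−1) + A(t) − S(t))⁺ and Q*(t) = (Q*(t−1) + A(t) − S*(t))⁺. Suppose Q(t−B(t)) = 0 where B(t) = min{s ≥ 0 : Q(t−s) = 0}. Then Q(t) − Q*(t) ≤ ∑_{l=t−B(t)+1}^{t} (S*(l) − S(l)). -/
/-!
During the busy period of `Q` that began at time `t - B`, the truncation at `0` never acts
on `Q`, so `Q` follows its arrivals and services exactly, while `Q*` can only be pushed up by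
its truncation. Hence each step raises `Q - Q*` by at most `S*(l) - S(l)`; summing over the
busy period from `Q(t - B) - Q*(t - B) = -Q*(t - B) ≤ 0` gives the bound.
-/

namespace Lindley

lemma eq_of_max_zero_ne_zero {α : Type*} [LinearOrder α] [Zero α] {x : α}
    (h : max x 0 ≠ 0) : max x 0 = x :=
  max_eq_left <| le_of_not_gt fun hx => h (max_eq_right hx.le)

lemma nonneg {α : Type*} [LinearOrder α] [AddZeroClass α] [Sub α] {Q A S : ℕ → α}
    (hQ0 : 0 ≤ Q 0) (hrec : ∀ l, 1 ≤ l → Q l = max (Q (l - 1) + A l - S l) 0) (l : ℕ) :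
    0 ≤ Q l := by
  cases l with
  | zero => exact hQ0
  | succ l => exact hrec (l + 1) l.succ_pos ▸ le_max_right _ _

variable {α : Type*} [AddCommGroup α] [LinearOrder α] [IsOrderedAddMonoid α]

lemma sub_le_sub_add_service_of_ne_zero {Q Qstar A S Sstar : ℕ → α}
    (hrec : ∀ l, 1 ≤ l → Q l = max (Q (l - 1) + A l - S l) 0)
    (hrecstar : ∀ l, 1 ≤ l → Qstar l = max (Qstar (l - 1) + A l - Sstar l) 0)
    {l : ℕ} (hbusy : Q (l + 1) ≠ 0) :
    Q (l + 1) - Qstar (l + 1) ≤ Q l - Qstar l + (Sstar (l + 1) - S (l + 1)) := by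
  have hQ := hrec (l + 1) l.succ_pos
  have hQstar := hrecstar (l + 1) l.succ_pos
  rw [Nat.add_sub_cancel] at hQ hQstar
  have hfree : Q (l + 1) = Q l + A (l + 1) - S (l + 1) :=
    hQ.trans (eq_of_max_zero_ne_zero (hQ ▸ hbusy))
  have hpushed : Qstar l + A (l + 1) - Sstar (l + 1) ≤ Qstar (l + 1) :=
    hQstar ▸ le_max_left _ _
  calc Q (l + 1) - Qstar (l + 1)
      ≤ Q l + A (l + 1) - S (l + 1) - (Qstar l + A (l + 1) - Sstar (l + 1)) :=
        hfree ▸ sub_le_sub_left hpushed _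
    _ = Q l - Qstar l + (Sstar (l + 1) - S (l + 1)) := by abel

lemma sub_le_sub_add_sum_service_of_busy {Q Qstar A S Sstar : ℕ → α}
    (hrec : ∀ l, 1 ≤ l → Q l = max (Q (l - 1) + A l - S l) 0)
    (hrecstar : ∀ l, 1 ≤ l → Qstar l = max (Qstar (l - 1) + A l - Sstar l) 0)
    {a b : ℕ} (hab : a ≤ b) (hbusy : ∀ l, a < l → l ≤ b → Q l ≠ 0) :
    Q b - Qstar b ≤ Q a - Qstar a + ∑ l ∈ Finset.Icc (a + 1) b, (Sstar l - S l) := by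
  induction b, hab using Nat.le_induction with
  | base => simp
  | succ b hab ih =>
    calc Q (b + 1) - Qstar (b + 1)
        ≤ Q b - Qstar b + (Sstar (b + 1) - S (b + 1)) :=
          sub_le_sub_add_service_of_ne_zero hrec hrecstar (hbusy _ (by omega) le_rfl)
      _ ≤ Q a - Qstar a + ∑ l ∈ Finset.Icc (a + 1) b, (Sstar l - S l)
            + (Sstar (b + 1) - S (b + 1)) :=
          add_le_add_left (ih fun l hal hlb => hbusy l hal (by omega)) _
      _ = Q a - Qstar a + ∑ l ∈ Finset.Icc (a + 1) (b + 1), (Sstar l - S l) := by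
          rw [Finset.sum_Icc_succ_top (by omega), add_assoc]

end Lindley

theorem queue_regret_le_service_diff_general (Q Qstar A S Sstar : ℕ → ℤ)
    (hQstar0 : 0 ≤ Qstar 0)
    (hrec : ∀ l, 1 ≤ l → Q l = max (Q (l - 1) + A l - S l) 0)
    (hrecstar : ∀ l, 1 ≤ l → Qstar l = max (Qstar (l - 1) + A l - Sstar l) 0)
    {t B : ℕ}
    (hzero : Q (t - B) = 0)
    (hmin : ∀ s, s < B → Q (t - s) ≠ 0) :
    Q t - Qstar t ≤ ∑ l ∈ Finset.Icc (t - B + 1) t, (Sstar l - S l) := by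
  have hbusy : ∀ l, t - B < l → l ≤ t → Q l ≠ 0 := fun l hl hlt => by
    simpa [Nat.sub_sub_self hlt] using hmin (t - l) (by omega)
  have hstart : Q (t - B) - Qstar (t - B) ≤ 0 := by
    rw [hzero, zero_sub, neg_nonpos]
    exact Lindley.nonneg hQstar0 hrecstar _
  calc Q t - Qstar t
      ≤ Q (t - B) - Qstar (t - B) + ∑ l ∈ Finset.Icc (t - B + 1) t, (Sstar l - S l) :=
        Lindley.sub_le_sub_add_sum_service_of_busy hrec hrecstar (Nat.sub_le t B) hbusy
    _ ≤ ∑ l ∈ Finset.Icc (t - B + 1) t, (Sstar l - S l) := add_le_of_nonpos_left hstart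

/-- For two coupled Lindley queues driven by the same arrivals, with `B(t)` the age of the
current busy period of `Q` (so `Q(t - B(t)) = 0` and `Q > 0` since then),
`Q(t) - Q*(t) ≤ ∑_{l=t-B(t)+1}^t (S*(l) - S(l))`. -/
theorem queue_regret_le_service_diff (Q Qstar A S Sstar : ℕ → ℤ)
    (hA : ∀ l, A l = 0 ∨ A l = 1) (hS : ∀ l, S l = 0 ∨ S l = 1)
    (hSstar : ∀ l, Sstar l = 0 ∨ Sstar l = 1)
    (hQ0 : 0 ≤ Q 0) (hQstar0 : 0 ≤ Qstar 0)
    (hrec : ∀ l, 1 ≤ l → Q l = max (Q (l - 1) + A l - S l) 0)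
    (hrecstar : ∀ l, 1 ≤ l → Qstar l = max (Qstar (l - 1) + A l - Sstar l) 0)
    {t B : ℕ} (hB : B ≤ t)
    (hzero : Q (t - B) = 0)
    (hmin : ∀ s, s < B → Q (t - s) ≠ 0) :
    Q t - Qstar t ≤ ∑ l ∈ Finset.Icc (t - B + 1) t, (Sstar l - S l) :=
  queue_regret_le_service_diff_general Q Qstar A S Sstar hQstar0 hrec hrecstar hzero hmin
end

section
/- Lower bound on queue regret via suboptimal play count: consider a single queue with Bernoulli(λ) arrivals and K servers with Bernoulli service rates μ_1,…,μ_K, optimal server k* with rate μ* = max_k μ_k, and ε = μ* − λ. For any scheduling policy, if Q(0) is distributed according to the stationary distribution of the optimal queue (so E[Q(t)] − E[Q*(t)] = E[Q(t)] − E[Q(0)] with Q* stationary), then the regret satisfies Ψ(t) = E[Q(t) − Q*(t)] ≥ ∑_{k ≠ k*} Δ_k · E[T_k(t)] − ε·t, where Δ_k = μ* − μ_k and T_k(t) is the number of times server k is scheduled in the first t slots. -/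
open MeasureTheory Real
open scoped ENNReal

/-! Lindley's recursion `Q(l) = (Q(l-1) + A(l) - S(l))⁺` gives `Q(l) ≥ Q(l-1) + A(l) - S(l)`, so
`Q(t) ≥ Q(0) + ∑_{l ≤ t} (A(l) - S(l))`. Taking expectations, the drift of slot `l` is
`λ - ∑_k μ_k P(κ_l = k) = ∑_{k ≠ k*} Δ_k P(κ_l = k) - ε`, because the scheduling probabilities
sum to one; summing over the slots turns `∑_l P(κ_l = k)` into `E[T_k(t)]`. -/

theorem add_sum_Icc_le_of_forall_add_le {q d : ℕ → ℝ} (hq : ∀ n, q n + d (n + 1) ≤ q (n + 1))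
    (n : ℕ) : q 0 + ∑ l ∈ Finset.Icc 1 n, d l ≤ q n := by
  induction n with
  | zero => simp
  | succ n ih =>
    rw [Finset.sum_Icc_succ_top (by omega), ← add_assoc]
    linarith [hq n]

theorem integral_add_sum_integral_le_of_forall_add_le {Ω : Type*} [MeasurableSpace Ω]
    {P : Measure Ω} {Q D : ℕ → Ω → ℝ} (hQ : ∀ n, Integrable (Q n) P)
    (hD : ∀ n, Integrable (D n) P) (hstep : ∀ n ω, Q n ω + D (n + 1) ω ≤ Q (n + 1) ω) (t : ℕ) :
    ∫ ω, Q 0 ω ∂P + ∑ l ∈ Finset.Icc 1 t, ∫ ω, D l ω ∂P ≤ ∫ ω, Q t ω ∂P := by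
  have hsum : Integrable (fun ω ↦ ∑ l ∈ Finset.Icc 1 t, D l ω) P :=
    integrable_finsetSum _ fun l _ ↦ hD l
  calc ∫ ω, Q 0 ω ∂P + ∑ l ∈ Finset.Icc 1 t, ∫ ω, D l ω ∂P
      = ∫ ω, (Q 0 ω + ∑ l ∈ Finset.Icc 1 t, D l ω) ∂P := by
        rw [integral_add (hQ 0) hsum, integral_finsetSum _ fun l _ ↦ hD l]
    _ ≤ ∫ ω, Q t ω ∂P :=
        integral_mono ((hQ 0).add hsum) (hQ t)
          fun ω ↦ add_sum_Icc_le_of_forall_add_le (q := (Q · ω)) (hstep · ω) t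

theorem sum_measure_fiber_toReal_eq_one {Ω ι : Type*} [MeasurableSpace Ω] [Fintype ι]
    [MeasurableSpace ι] [MeasurableSingletonClass ι] (P : Measure Ω) [IsProbabilityMeasure P]
    {f : Ω → ι} (hf : Measurable f) : ∑ k, (P {ω | f ω = k}).toReal = 1 := by
  have h := sum_measureReal_preimage_singleton (μ := P) Finset.univ
    fun k _ ↦ hf (measurableSet_singleton k)
  rw [Finset.coe_univ, Set.preimage_univ, probReal_univ] at h
  exact h

theorem sub_sum_mul_eq_sum_sdiff_singleton {ι : Type*} [Fintype ι] [DecidableEq ι]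
    (μ p : ι → ℝ) (hp : ∑ k, p k = 1) (i : ι) :
    μ i - ∑ k, μ k * p k = ∑ k ∈ Finset.univ \ {i}, (μ i - μ k) * p k := by
  rw [Finset.sum_sdiff_eq_sub (Finset.subset_univ _), Finset.sum_singleton, sub_self, zero_mul,
    sub_zero]
  simp only [sub_mul, Finset.sum_sub_distrib, ← Finset.mul_sum, hp, mul_one]

theorem queue_regret_lower_via_suboptimal_count_general
    {Ω : Type*} [MeasurableSpace Ω] (P : Measure Ω) [IsProbabilityMeasure P]
    (K : ℕ) (μ : Fin K → ℝ) (lam : ℝ) (kstar : Fin K)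
    (Q Qstar : ℕ → Ω → ℝ) (A S : ℕ → Ω → ℝ) (κ : ℕ → Ω → Fin K)
    (hκ : ∀ l, Measurable (κ l))
    (hint : ∀ l, Integrable (Q l) P)
    (hintA : ∀ l, Integrable (A l) P) (hintS : ∀ l, Integrable (S l) P)
    (hrec : ∀ l ω, 1 ≤ l → Q l ω = max (Q (l - 1) ω + A l ω - S l ω) 0)
    (hA : ∀ l, ∫ ω, A l ω ∂P = lam)
    (hS : ∀ l, ∫ ω, S l ω ∂P = ∑ k, μ k * (P {ω | κ l ω = k}).toReal)
    (t : ℕ)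
    (hstat : ∫ ω, Qstar t ω ∂P = ∫ ω, Q 0 ω ∂P) :
    (∫ ω, Q t ω ∂P) - (∫ ω, Qstar t ω ∂P)
      ≥ (∑ k ∈ Finset.univ \ {kstar},
            (μ kstar - μ k) * ∑ l ∈ Finset.Icc 1 t, (P {ω | κ l ω = k}).toReal)
        - (μ kstar - lam) * t := by
  have hstep : ∀ n ω, Q n ω + (A (n + 1) ω - S (n + 1) ω) ≤ Q (n + 1) ω := fun n ω ↦ by
    rw [hrec (n + 1) ω (by omega), Nat.add_sub_cancel, ← add_sub_assoc]
    exact le_max_left _ _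
  have hdrift : ∀ l, ∫ ω, (A l ω - S l ω) ∂P
      = ∑ k ∈ Finset.univ \ {kstar}, (μ kstar - μ k) * (P {ω | κ l ω = k}).toReal
        - (μ kstar - lam) := fun l ↦ by
    rw [integral_sub (hintA l) (hintS l), hA, hS, ← sub_sum_mul_eq_sum_sdiff_singleton μ _
      (sum_measure_fiber_toReal_eq_one P (hκ l))]
    ring
  have hmean := integral_add_sum_integral_le_of_forall_add_le
    (D := fun l ω ↦ A l ω - S l ω) hint (fun l ↦ (hintA l).sub (hintS l)) hstep t
  simp only [hdrift, Finset.sum_sub_distrib, Finset.sum_const, Nat.card_Icc,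
    Nat.add_sub_cancel, nsmul_eq_mul] at hmean
  rw [Finset.sum_comm] at hmean
  simp only [← Finset.mul_sum] at hmean
  rw [hstat]
  linarith

/-- Lower bound on queue regret via the suboptimal play count: for a single queue with
Bernoulli(λ) arrivals and `K` servers with rates `μ`, optimal server `k*` (rate
`μ* = max_k μ_k`, `ε = μ* - λ`), if the initial queue length is stationary for the optimal
policy (so that `E[Q*(t)] = E[Q(0)]`), then
`Ψ(t) = E[Q(t) - Q*(t)] ≥ ∑_{k ≠ k*} Δ_k E[T_k(t)] - ε t`. -/
theorem queue_regret_lower_via_suboptimal_count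
    {Ω : Type*} [MeasurableSpace Ω] (P : Measure Ω) [IsProbabilityMeasure P]
    (K : ℕ) (μ : Fin K → ℝ) (lam : ℝ) (kstar : Fin K)
    (hopt : ∀ k, μ k ≤ μ kstar)
    (Q Qstar : ℕ → Ω → ℝ) (A S : ℕ → Ω → ℝ) (κ : ℕ → Ω → Fin K)
    (hκ : ∀ l, Measurable (κ l))
    (hint : ∀ l, Integrable (Q l) P)
    (hintA : ∀ l, Integrable (A l) P) (hintS : ∀ l, Integrable (S l) P)
    (hrec : ∀ l ω, 1 ≤ l → Q l ω = max (Q (l - 1) ω + A l ω - S l ω) 0)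
    (hA : ∀ l, ∫ ω, A l ω ∂P = lam)
    (hS : ∀ l, ∫ ω, S l ω ∂P = ∑ k, μ k * (P {ω | κ l ω = k}).toReal)
    (t : ℕ)
    (hstat : ∫ ω, Qstar t ω ∂P = ∫ ω, Q 0 ω ∂P) :
    (∫ ω, Q t ω ∂P) - (∫ ω, Qstar t ω ∂P)
      ≥ (∑ k ∈ Finset.univ \ {kstar},
            (μ kstar - μ k) * ∑ l ∈ Finset.Icc 1 t, (P {ω | κ l ω = k}).toReal)
        - (μ kstar - lam) * t :=
  queue_regret_lower_via_suboptimal_count_general P K μ lam kstar Q Qstar A S κ hκ hint hintA hintS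
    hrec hA hS t hstat
end
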